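/- arXiv:2303.03788 — 3 statements merged into one kernel-verified Lean document; each statement's English description precedes it below -/
import Mathlib

section
/- If μ is a singular strong limit cardinal and G is a locally finite group of cardinality μ, then the set {M : M is a subgroup of G of cardinality < μ which is cf(μ)-indecomposable} has cardinality at most μ. -/
universe u
open Cardinal

/-- A group is locally finite if every finitely generated subgroup is finite. -/
def LocallyFiniteGroup (G : Type u) [Group G] : Prop :=
  ∀ s : Finset G, Set.Finite ((Subgroup.closure (s : Set G) : Subgroup G) : Set G)

/-- A group `G` is `θ`-indecomposable when every `⊆`-increasing sequence
`⟨M_i : i < θ⟩` of subgroups of `G` with union `G` contains `G` as a member. -/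
def GroupIndecomp (θ : Cardinal.{u}) (G : Type u) [Group G] : Prop :=
  ∀ M : θ.ord.ToType → Subgroup G, Monotone M → (⨆ i, M i) = ⊤ → ∃ i, M i = ⊤

/-- `θ` is a Jonsson cardinal: for every function `f` from the finite subsets of `θ` to `θ`
there is a subset `H ⊆ θ` of cardinality `θ` such that `f` restricted to the finite subsets
of `H` omits some value `< θ`. -/
def IsJonssonCard (θ : Cardinal.{u}) : Prop :=
  ∀ f : Finset θ.ord.ToType → θ.ord.ToType,
    ∃ H : Set θ.ord.ToType, #H = θ ∧
      ∃ y : θ.ord.ToType, ∀ s : Finset θ.ord.ToType, ↑s ⊆ H → f s ≠ y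

/-- The set `Θ_λ`: it is `{cf λ, cf μ}` if `λ = μ⁺` for a singular `μ` which is the supremum
of the regular Jonsson cardinals below it, and `{cf λ}` otherwise. -/
def ThetaSet (lam : Cardinal.{u}) : Set Cardinal.{u} :=
  {θ | θ = lam.ord.cof ∨
    ∃ μ : Cardinal.{u}, lam = Order.succ μ ∧ ℵ₀ ≤ μ ∧ μ.ord.cof < μ ∧
      μ = sSup {κ | κ < μ ∧ κ.IsRegular ∧ IsJonssonCard κ} ∧ θ = μ.ord.cof}

/-! Well-order `G` in type `μ` and fix a monotone cofinal sequence of length `cf μ`; the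
subgroups generated by the initial segments ending at its terms form a chain `⟨G_i : i < cf μ⟩`
of subgroups of cardinality `< μ` with union `G`. A `cf μ`-indecomposable subgroup `M` is the
union of the chain `M ∩ G_i`, hence lies in some `G_i`. So there are at most
`∑_{i < cf μ} 2 ^ |G_i| ≤ cf μ · μ = μ` of them, since `μ` is a strong limit. -/

theorem Subgroup.cardinalMk_closure_le_max {G : Type u} [Group G] (s : Set G) :
    #(Subgroup.closure s) ≤ max #s ℵ₀ := by
  rw [FreeGroup.closure_eq_range]
  refine (mk_range_le (f := FreeGroup.lift ((↑) : s → G))).trans ?_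
  cases isEmpty_or_nonempty s
  · exact mk_le_aleph0.trans (le_max_right _ _)
  · rw [mk_freeGroup]

theorem Cardinal.mk_Iic_toType_ord_lt {c : Cardinal.{u}} (hc : ℵ₀ ≤ c) (x : c.ord.ToType) :
    #(Set.Iic x) < c := by
  rw [← Set.Iio_insert]
  have hIio : #(Set.Iio x) < c := by simpa using mk_Iio_lt x
  exact mk_insert_le.trans_lt (add_lt_of_lt hc hIio (one_lt_aleph0.trans_le hc))

theorem Ordinal.exists_monotone_isCofinal_range (o : Ordinal.{u}) :
    ∃ f : o.cof.ord.ToType → o.ToType, Monotone f ∧ IsCofinal (Set.range f) := by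
  obtain ⟨f, hf⟩ := exists_isFundamentalSeq (o := o) rfl
  refine ⟨ToType.mk ∘ f ∘ ToType.mk.symm,
    ToType.mk.monotone.comp (hf.strictMono.monotone.comp ToType.mk.symm.monotone), ?_⟩
  rw [Set.range_comp, Set.range_comp, ToType.mk.symm.range_eq, Set.image_univ,
    ToType.mk.map_isCofinal_iff]
  exact hf.isCofinal_range

theorem Cardinal.exists_monotone_cover_of_mk_eq {α : Type u} {μ : Cardinal.{u}} (hμ : ℵ₀ ≤ μ)
    (hα : #α = μ) : ∃ T : μ.ord.cof.ord.ToType → Set α,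
      Monotone T ∧ (∀ x, ∃ i, x ∈ T i) ∧ ∀ i, #(T i) < μ := by
  obtain ⟨e⟩ : Nonempty (α ≃ μ.ord.ToType) := Cardinal.eq.1 (by simp [hα])
  obtain ⟨f, hf_mono, hf_cofinal⟩ := Ordinal.exists_monotone_isCofinal_range μ.ord
  refine ⟨fun i => e ⁻¹' Set.Iic (f i), fun i j hij x hx => le_trans hx (hf_mono hij),
    fun x => ?_, fun i => ?_⟩
  · obtain ⟨_, ⟨i, rfl⟩, hi⟩ := hf_cofinal (e x)
    exact ⟨i, hi⟩
  · exact (mk_preimage_of_injective e _ e.injective).trans_lt (mk_Iic_toType_ord_lt hμ _)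

theorem Subgroup.exists_monotone_cover_of_mk_eq {G : Type u} [Group G] {μ : Cardinal.{u}}
    (hμ : ℵ₀ < μ) (hG : #G = μ) : ∃ H : μ.ord.cof.ord.ToType → Subgroup G,
      Monotone H ∧ (∀ x, ∃ i, x ∈ H i) ∧ ∀ i, #(H i) < μ := by
  obtain ⟨T, hT_mono, hT_cover, hT_small⟩ := Cardinal.exists_monotone_cover_of_mk_eq hμ.le hG
  refine ⟨fun i => closure (T i), fun i j hij => closure_mono (hT_mono hij),
    fun x => ?_, fun i => ?_⟩
  · obtain ⟨i, hi⟩ := hT_cover x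
    exact ⟨i, subset_closure hi⟩
  · exact (cardinalMk_closure_le_max _).trans_lt (max_lt (hT_small i) hμ)

theorem GroupIndecomp.exists_le {θ : Cardinal.{u}} {G : Type u} [Group G] {M : Subgroup G}
    (hM : GroupIndecomp θ M) {H : θ.ord.ToType → Subgroup G} (hH_mono : Monotone H)
    (hH_cover : ∀ x, ∃ i, x ∈ H i) : ∃ i, M ≤ H i := by
  have hcover : (⨆ i, (H i).comap M.subtype) = ⊤ := by
    refine eq_top_iff.2 fun m _ => ?_
    obtain ⟨i, hi⟩ := hH_cover m
    exact le_iSup (fun i => (H i).comap M.subtype) i hi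
  obtain ⟨i, hi⟩ := hM _ (fun i j hij => Subgroup.comap_mono (hH_mono hij)) hcover
  exact ⟨i, fun x hx => Subgroup.mem_comap.1 (hi ▸ Subgroup.mem_top (⟨x, hx⟩ : M))⟩

theorem Subgroup.mk_le_two_power (G : Type u) [Group G] : #(Subgroup G) ≤ 2 ^ #G :=
  (mk_le_of_injective SetLike.coe_injective).trans_eq (mk_set (α := G))

theorem Subgroup.mk_exists_le_le_sum_two_power {G : Type u} [Group G] {ι : Type u}
    (H : ι → Subgroup G) :
    #{M : Subgroup G // ∃ i, M ≤ H i} ≤ sum fun i => 2 ^ #(H i) := by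
  let restrict : (Σ i, Subgroup (H i)) → {M : Subgroup G // ∃ i, M ≤ H i} :=
    fun K => ⟨K.2.map (H K.1).subtype, K.1, map_subtype_le K.2⟩
  have h_surj : Function.Surjective restrict := fun ⟨M, i, hi⟩ =>
    ⟨⟨i, M.subgroupOf (H i)⟩, Subtype.ext (map_subgroupOf_eq_of_le hi)⟩
  calc #{M : Subgroup G // ∃ i, M ≤ H i} ≤ #(Σ i, Subgroup (H i)) := mk_le_of_surjective h_surj
    _ = sum fun i => #(Subgroup (H i)) := mk_sigma _
    _ ≤ sum fun i => 2 ^ #(H i) := sum_le_sum _ _ fun i => mk_le_two_power _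

theorem card_indecomposable_subgroups_le_general (μ : Cardinal.{u})
    (hsl : μ.IsStrongLimit) (hsing : μ.ord.cof < μ)
    (G : Type u) [Group G] (hGc : #G = μ) :
    #{M : Subgroup G // #M < μ ∧ GroupIndecomp μ.ord.cof ↥M} ≤ μ := by
  have hcof : ℵ₀ ≤ μ.ord.cof :=
    Ordinal.aleph0_le_cof_iff.2 (Ordinal.one_lt_cof_iff.2 (isSuccLimit_ord hsl.aleph0_le))
  obtain ⟨H, hH_mono, hH_cover, hH_small⟩ :=
    Subgroup.exists_monotone_cover_of_mk_eq (hcof.trans_lt hsing) hGc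
  calc #{M : Subgroup G // #M < μ ∧ GroupIndecomp μ.ord.cof ↥M}
      ≤ #{M : Subgroup G // ∃ i, M ≤ H i} :=
        mk_subtype_mono fun M hM => hM.2.exists_le hH_mono hH_cover
    _ ≤ sum fun i => 2 ^ #(H i) := Subgroup.mk_exists_le_le_sum_two_power H
    _ ≤ sum fun _ : μ.ord.cof.ord.ToType => μ :=
        sum_le_sum _ _ fun i => (hsl.isStrongPrelimit (hH_small i)).le
    _ = μ.ord.cof * μ := by simp
    _ = μ := mul_eq_right hsl.aleph0_le hsing.le (aleph0_pos.trans_le hcof).ne'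

/-- If `μ` is a singular strong limit cardinal and `G` a locally finite
group of cardinality `μ`, the set of `cf(μ)`-indecomposable subgroups of `G` of cardinality
`< μ` has cardinality at most `μ`. -/
theorem card_indecomposable_subgroups_le (μ : Cardinal.{u})
    (hsl : μ.IsStrongLimit) (hsing : μ.ord.cof < μ)
    (G : Type u) [Group G] (hG : LocallyFiniteGroup G) (hGc : #G = μ) :
    #{M : Subgroup G // #M < μ ∧ GroupIndecomp μ.ord.cof ↥M} ≤ μ :=
  card_indecomposable_subgroups_le_general μ hsl hsing G hGc
end

section
/- Let μ be a strong limit cardinal of cofinality ℵ₀. Then any two members of K^spc_μ are isomorphic. -/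
/-!
A back-and-forth argument. Write `G₁ = ⋃ Cₙ` and `G₂ = ⋃ Dₙ` as unions of small
ℵ₀-indecomposable subgroups, as in (b). We build small ℵ₀-indecomposable `Aₙ ≤ G₁` and
embeddings `wₙ : G₁ → G₂` such that `wₙ₊₁` agrees with `wₙ` on `Aₙ`, `Cₙ ≤ Aₙ₊₁` and
`Dₙ ≤ wₙ₊₁(Aₙ₊₁)`. Given `(w, A)`, the amalgamation property (c) of `G₁` at `A` yields
`v : G₂ → G₁` inverting `w` on `A`; covering `w(A) ∪ Dₙ` by a small ℵ₀-indecomposable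
`D ≤ G₂` (using (b)), property (c) of `G₂` at `D` yields `w' : G₁ → G₂` inverting `v` on `D`,
so `w'` extends `w|A` and `D ≤ w'(v(D))`. The union of the `wₙ|Aₙ` is an isomorphism.
-/

universe u
open Cardinal

/-- `G` is a universal locally finite group of cardinality `μ`. -/
def UniversalLF (μ : Cardinal.{u}) (G : Type u) [Group G] : Prop :=
  LocallyFiniteGroup G ∧ #G = μ ∧
    ∀ (H : Type u) (_ : Group H), LocallyFiniteGroup H → #H = μ →
      ∃ f : H →* G, Function.Injective f

/-- The pair `(G, H)` (with `H` embedded in `G` via `e`) is a universal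
`(μ, <μ)`-amalgamation base: every locally finite group `G'` of cardinality `μ`
containing `G` embeds into `G` over `H`. -/
def UnivAmalgBase (μ : Cardinal.{u}) (H G : Type u) [Group H] [Group G] (e : H →* G) : Prop :=
  ∀ (G' : Type u) (_ : Group G'), LocallyFiniteGroup G' → #G' = μ →
    ∀ g : G →* G', Function.Injective g →
      ∃ f : G' →* G, Function.Injective f ∧ f.comp (g.comp e) = e

/-- `G` belongs to the class `K^spc_μ`. -/
def KSpc (μ : Cardinal.{u}) (G : Type u) [Group G] : Prop :=
  LocallyFiniteGroup G ∧ #G = μ ∧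
  -- (b) every small subgroup is covered by an increasing ω-chain of ℵ₀-indecomposable
  -- subgroups with small union, and G itself is such a union
  ((∀ H : Subgroup G, #H < μ →
      ∃ Hn : ℕ → Subgroup G, Monotone Hn ∧ (∀ n, GroupIndecomp ℵ₀ ↥(Hn n)) ∧
        #(↥(⨆ n, Hn n)) < μ ∧ H ≤ ⨆ n, Hn n) ∧
    (∃ Gn : ℕ → Subgroup G, Monotone Gn ∧
      (∀ n, GroupIndecomp ℵ₀ ↥(Gn n) ∧ #(Gn n) < μ) ∧ (⨆ n, Gn n) = ⊤)) ∧
  -- (c) for every ℵ₀-indecomposable small subgroup H, (G,H) is a universal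
  -- (μ,<μ)-amalgamation base
  (∀ H : Subgroup G, #H < μ → GroupIndecomp ℵ₀ ↥H →
    UnivAmalgBase μ (↥H) G H.subtype) ∧
  -- (d) compatible ℵ₀-indecomposable small extensions of small ℵ₀-indecomposable
  -- subgroups embed over them
  (∀ H : Subgroup G, #H < μ → GroupIndecomp ℵ₀ ↥H →
    ∀ (H' : Type u) (_ : Group H'), LocallyFiniteGroup H' → #H' < μ → GroupIndecomp ℵ₀ H' →
      ∀ eH : ↥H →* H', Function.Injective eH →
        (∃ (Gp : Type u) (_ : Group Gp), LocallyFiniteGroup Gp ∧ #Gp ≤ μ ∧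
          ∃ (φ : G →* Gp) (ψ : H' →* Gp), Function.Injective φ ∧ Function.Injective ψ ∧
            ∀ x : ↥H, φ (x : G) = ψ (eH x)) →
        ∃ f : H' →* G, Function.Injective f ∧ ∀ x : ↥H, f (eH x) = (x : G))

section Indecomposable

variable {G H : Type u} [Group G] [Group H]

lemma nonempty_orderIso_nat_aleph0_ord_toType :
    Nonempty (ℕ ≃o (ℵ₀ : Cardinal.{u}).ord.ToType) := by
  have h : Ordinal.lift.{u} (Ordinal.type ((· < ·) : ℕ → ℕ → Prop)) =
      Ordinal.lift.{0} (Ordinal.type ((· < ·) : (ℵ₀ : Cardinal.{u}).ord.ToType → _ → Prop)) := by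
    rw [Ordinal.type_toType, ord_aleph0, Ordinal.type_nat_lt]
    simp
  exact (Ordinal.lift_type_eq.1 h).map OrderIso.ofRelIsoLT

lemma GroupIndecomp.of_mulEquiv {θ : Cardinal.{u}} (e : G ≃* H) (hG : GroupIndecomp θ G) :
    GroupIndecomp θ H := by
  intro M hM htop
  have hpull : ⨆ i, (M i).map (e.symm : H →* G) = ⊤ := by
    rw [← Subgroup.map_iSup, htop, Subgroup.map_top_of_surjective _ e.symm.surjective]
  obtain ⟨i, hi⟩ := hG _ (fun i j hij => Subgroup.map_mono (hM hij)) hpull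
  refine ⟨i, ?_⟩
  rw [← (Subgroup.map_symm_eq_iff_map_eq _).1 hi, Subgroup.map_top_of_surjective _ e.surjective]

lemma GroupIndecomp.of_subsingleton {θ : Cardinal.{u}} (hθ : θ ≠ 0) [Subsingleton G] :
    GroupIndecomp θ G := by
  intro M _ _
  obtain ⟨i⟩ := Ordinal.nonempty_toType_iff.2 (ord_eq_zero.not.2 hθ)
  exact ⟨i, Subsingleton.elim _ _⟩

lemma GroupIndecomp.exists_eq_top_of_nat (hG : GroupIndecomp ℵ₀ G) {M : ℕ → Subgroup G}
    (hM : Monotone M) (htop : ⨆ n, M n = ⊤) : ∃ n, M n = ⊤ := by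
  obtain ⟨e⟩ := nonempty_orderIso_nat_aleph0_ord_toType.{u}
  obtain ⟨i, hi⟩ := hG (fun i => M (e.symm i)) (hM.comp e.symm.monotone)
    (by rwa [e.symm.surjective.iSup_comp M])
  exact ⟨e.symm i, hi⟩

lemma GroupIndecomp.exists_le_of_le_iSup {K : Subgroup G} (hK : GroupIndecomp ℵ₀ K)
    {M : ℕ → Subgroup G} (hM : Monotone M) (hle : K ≤ ⨆ n, M n) : ∃ n, K ≤ M n := by
  have htop : ⨆ n, (M n).subgroupOf K = ⊤ := by
    refine eq_top_iff.2 fun x _ => ?_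
    obtain ⟨n, hn⟩ := (Subgroup.mem_iSup_of_directed hM.directed_le).1 (hle x.2)
    exact Subgroup.mem_iSup_of_mem n (Subgroup.mem_subgroupOf.2 hn)
  obtain ⟨n, hn⟩ := hK.exists_eq_top_of_nat (fun _ _ h => Subgroup.comap_mono (hM h)) htop
  exact ⟨n, Subgroup.subgroupOf_eq_top.1 hn⟩

end Indecomposable

section Cardinality

variable {G H : Type u} [Group G] [Group H]

lemma Subgroup.mk_closure_le_max (S : Set G) : #(Subgroup.closure S) ≤ max #S ℵ₀ := by
  rcases S.eq_empty_or_nonempty with rfl | hS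
  · rw [Subgroup.closure_empty, Cardinal.mk_eq_one]
    exact one_le_aleph0.trans (le_max_right _ _)
  · have : Nonempty S := hS.to_subtype
    rw [FreeGroup.closure_eq_range, ← mk_freeGroup]
    exact mk_range_le

lemma LocallyFiniteGroup.mk_closure_lt (hG : LocallyFiniteGroup G) {μ : Cardinal.{u}}
    (hμ : ℵ₀ ≤ μ) {S : Set G} (hS : #S < μ) : #(Subgroup.closure S) < μ := by
  rcases lt_or_ge #S ℵ₀ with hfin | hinf
  · have := hG (lt_aleph0_iff_set_finite.1 hfin).toFinset
    rw [Set.Finite.coe_toFinset] at this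
    exact this.lt_aleph0.trans_le hμ
  · exact (Subgroup.mk_closure_le_max S).trans_lt (max_lt hS (hinf.trans_lt hS))

lemma LocallyFiniteGroup.mk_sup_lt (hG : LocallyFiniteGroup G) {μ : Cardinal.{u}}
    (hμ : ℵ₀ ≤ μ) {A B : Subgroup G} (hA : #A < μ) (hB : #B < μ) : #(↥(A ⊔ B)) < μ := by
  rw [Subgroup.sup_eq_closure]
  exact hG.mk_closure_lt hμ ((mk_union_le _ _).trans_lt (add_lt_of_lt hμ hA hB))

lemma LocallyFiniteGroup.prod (hG : LocallyFiniteGroup G) (hH : LocallyFiniteGroup H) :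
    LocallyFiniteGroup (G × H) := by
  classical
  intro s
  have hle : Subgroup.closure (s : Set (G × H)) ≤
      (Subgroup.closure (s.image Prod.fst : Set G)).prod
        (Subgroup.closure (s.image Prod.snd : Set H)) := by
    rw [Subgroup.closure_le]
    intro x hx
    exact Subgroup.mem_prod.2
      ⟨Subgroup.subset_closure (by simpa using ⟨x.2, hx⟩),
        Subgroup.subset_closure (by simpa using ⟨x.1, hx⟩)⟩
  refine ((hG (s.image Prod.fst)).prod (hH (s.image Prod.snd))).subset ?_
  rw [← Subgroup.coe_prod]
  exact hle

end Cardinality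

section SmallIndecomposable

variable {G H : Type u} [Group G] [Group H] {μ : Cardinal.{u}}

def IsSmallIndecomp (μ : Cardinal.{u}) (A : Subgroup G) : Prop :=
  #A < μ ∧ GroupIndecomp ℵ₀ A

lemma IsSmallIndecomp.bot (hμ : 1 < μ) : IsSmallIndecomp μ (⊥ : Subgroup G) :=
  ⟨by simpa using hμ, .of_subsingleton aleph0_ne_zero⟩

lemma IsSmallIndecomp.map {A : Subgroup G} (hA : IsSmallIndecomp μ A) (f : G →* H)
    (hf : Function.Injective f) : IsSmallIndecomp μ (A.map f) :=
  ⟨(mk_congr (A.equivMapOfInjective f hf).toEquiv).symm.trans_lt hA.1,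
    hA.2.of_mulEquiv (A.equivMapOfInjective f hf)⟩

lemma KSpc.exists_isSmallIndecomp_ge (hG : KSpc μ G) (hμ : ℵ₀ ≤ μ) {K₁ K₂ : Subgroup G}
    (hK₁ : IsSmallIndecomp μ K₁) (hK₂ : IsSmallIndecomp μ K₂) :
    ∃ A, IsSmallIndecomp μ A ∧ K₁ ≤ A ∧ K₂ ≤ A := by
  obtain ⟨M, hM, hMi, hMs, hle⟩ := hG.2.2.1.1 _ (hG.1.mk_sup_lt hμ hK₁.1 hK₂.1)
  obtain ⟨m, hm⟩ := hK₁.2.exists_le_of_le_iSup hM (le_sup_left.trans hle)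
  obtain ⟨n, hn⟩ := hK₂.2.exists_le_of_le_iSup hM (le_sup_right.trans hle)
  refine ⟨M (max m n), ⟨?_, hMi _⟩, hm.trans (hM (le_max_left m n)),
    hn.trans (hM (le_max_right m n))⟩
  exact (mk_le_mk_of_subset (le_iSup M (max m n))).trans_lt hMs

lemma KSpc.exists_isSmallIndecomp_cover (hG : KSpc μ G) :
    ∃ C : ℕ → Subgroup G, (∀ n, IsSmallIndecomp μ (C n)) ∧ ∀ x, ∃ n, x ∈ C n := by
  obtain ⟨C, hC, hCi, htop⟩ := hG.2.2.1.2
  refine ⟨C, fun n => ⟨(hCi n).2, (hCi n).1⟩, fun x => ?_⟩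
  exact (Subgroup.mem_iSup_of_directed hC.directed_le).1 (htop ▸ Subgroup.mem_top x)

lemma KSpc.exists_injective_hom (hH : KSpc μ H) (hμ : ℵ₀ ≤ μ) (hG : LocallyFiniteGroup G)
    (hGμ : #G = μ) : ∃ w : G →* H, Function.Injective w := by
  have hprod : #(G × H) = μ := by
    rw [mk_prod, lift_id, lift_id, hGμ, hH.2.1, mul_eq_self hμ]
  obtain ⟨hbot, hbotI⟩ := IsSmallIndecomp.bot (G := H) (one_lt_aleph0.trans_le hμ)
  obtain ⟨f, hf, -⟩ := hH.2.2.2.1 ⊥ hbot hbotI (G × H) inferInstance (hG.prod hH.1) hprod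
    (MonoidHom.inr G H) (Prod.mk_right_injective 1)
  exact ⟨f.comp (MonoidHom.inl G H), hf.comp (Prod.mk_left_injective 1)⟩

end SmallIndecomposable

section BackAndForth

variable {G H : Type u} [Group G] [Group H] {μ : Cardinal.{u}}

lemma KSpc.exists_back_step (hG : KSpc μ G) (hH : KSpc μ H) (hμ : ℵ₀ ≤ μ)
    {w : G →* H} (hw : Function.Injective w) {A : Subgroup G} (hA : IsSmallIndecomp μ A)
    {K : Subgroup H} (hK : IsSmallIndecomp μ K) :
    ∃ (v : H →* G) (B : Subgroup H), Function.Injective v ∧ IsSmallIndecomp μ B ∧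
      A.map w ≤ B ∧ K ≤ B ∧ ∀ x ∈ A, v (w x) = x := by
  obtain ⟨B, hB, hAB, hKB⟩ := hH.exists_isSmallIndecomp_ge hμ (hA.map w hw) hK
  obtain ⟨v, hv, hvw⟩ := hG.2.2.2.1 A hA.1 hA.2 H inferInstance hH.1 hH.2.1 w hw
  exact ⟨v, B, hv, hB, hAB, hKB, fun x hx => DFunLike.congr_fun hvw ⟨x, hx⟩⟩

lemma KSpc.exists_back_and_forth_step (hG : KSpc μ G) (hH : KSpc μ H) (hμ : ℵ₀ ≤ μ)
    {w : G →* H} (hw : Function.Injective w) {A : Subgroup G} (hA : IsSmallIndecomp μ A)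
    {K₁ : Subgroup G} (hK₁ : IsSmallIndecomp μ K₁) {K₂ : Subgroup H}
    (hK₂ : IsSmallIndecomp μ K₂) :
    ∃ (w' : G →* H) (A' : Subgroup G), Function.Injective w' ∧ IsSmallIndecomp μ A' ∧
      A ≤ A' ∧ K₁ ≤ A' ∧ K₂ ≤ A'.map w' ∧ ∀ x ∈ A, w' x = w x := by
  obtain ⟨v, D, hv, hD, hAD, hK₂D, hvw⟩ := hG.exists_back_step hH hμ hw hA hK₂
  obtain ⟨E, hE, hAE, hK₁E⟩ := hG.exists_isSmallIndecomp_ge hμ hA hK₁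
  obtain ⟨w', A', hw', hA', hDA', hEA', hw'v⟩ := hH.exists_back_step hG hμ hv hD hE
  refine ⟨w', A', hw', hA', hAE.trans hEA', hK₁E.trans hEA', fun y hy => ?_, fun x hx => ?_⟩
  · exact ⟨v y, hDA' (Subgroup.mem_map_of_mem v (hK₂D hy)), hw'v y (hK₂D hy)⟩
  · have hwx : w x ∈ D := hAD (Subgroup.mem_map_of_mem w hx)
    rw [← hw'v _ hwx, hvw x hx]

end BackAndForth

lemma exists_seq_of_forall_exists_succ {α : Type*} {P : α → Prop} {R : ℕ → α → α → Prop}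
    {a : α} (ha : P a) (h : ∀ n a, P a → ∃ b, P b ∧ R n a b) :
    ∃ s : ℕ → α, (∀ n, P (s n)) ∧ ∀ n, R n (s n) (s (n + 1)) := by
  choose f hf using h
  let s : ℕ → {a // P a} := fun n =>
    Nat.rec ⟨a, ha⟩ (fun n b => ⟨f n b.1 b.2, (hf n b.1 b.2).1⟩) n
  exact ⟨fun n => (s n).1, fun n => (s n).2, fun n => (hf n (s n).1 (s n).2).2⟩

lemma nonempty_mulEquiv_of_chain {G H : Type*} [Group G] [Group H] {A : ℕ → Subgroup G}
    (hA : Monotone A) {u : ℕ → G →* H} (hu : ∀ n, Function.Injective (u n))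
    (hcompat : ∀ n, ∀ x ∈ A n, u (n + 1) x = u n x) (hG : ∀ x, ∃ n, x ∈ A n)
    (hH : ∀ y, ∃ n, y ∈ (A n).map (u n)) : Nonempty (G ≃* H) := by
  have hagree : ∀ m n, m ≤ n → ∀ x ∈ A m, u n x = u m x := by
    intro m n hmn
    induction n, hmn using Nat.le_induction with
    | base => exact fun _ _ => rfl
    | succ n hmn ih => exact fun x hx => (hcompat n x (hA hmn hx)).trans (ih x hx)
  choose N hN using hG
  have hF : ∀ n, ∀ x ∈ A n, u (N x) x = u n x := fun n x hx =>
    (le_total (N x) n).elim (fun h => (hagree _ _ h x (hN x)).symm) (fun h => hagree _ _ h x hx)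
  have hmem : ∀ x y, x ∈ A (max (N x) (N y)) ∧ y ∈ A (max (N x) (N y)) := fun x y =>
    ⟨hA (le_max_left _ _) (hN x), hA (le_max_right _ _) (hN y)⟩
  let F : G →* H := MonoidHom.mk' (fun x => u (N x) x) fun x y => by
    obtain ⟨hx, hy⟩ := hmem x y
    simp only [hF _ _ hx, hF _ _ hy, hF _ _ (mul_mem hx hy), map_mul]
  refine ⟨MulEquiv.ofBijective F ⟨fun x y hxy => ?_, fun y => ?_⟩⟩
  · obtain ⟨hx, hy⟩ := hmem x y
    refine hu (max (N x) (N y)) ?_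
    rw [← hF _ _ hx, ← hF _ _ hy]
    exact hxy
  · obtain ⟨n, x, hx, rfl⟩ := hH y
    exact ⟨x, hF n x hx⟩

theorem KSpc_unique_general (μ : Cardinal.{u})
    (hsl : μ.IsStrongLimit)
    (G₁ G₂ : Type u) [Group G₁] [Group G₂]
    (h₁ : KSpc μ G₁) (h₂ : KSpc μ G₂) :
    Nonempty (G₁ ≃* G₂) := by
  have hμ : ℵ₀ ≤ μ := hsl.aleph0_le
  obtain ⟨C₁, hC₁, hC₁cover⟩ := h₁.exists_isSmallIndecomp_cover
  obtain ⟨C₂, hC₂, hC₂cover⟩ := h₂.exists_isSmallIndecomp_cover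
  obtain ⟨w₀, hw₀⟩ := h₂.exists_injective_hom hμ h₁.1 h₁.2.1
  obtain ⟨s, hs, hstep⟩ := exists_seq_of_forall_exists_succ
    (P := fun p : (G₁ →* G₂) × Subgroup G₁ => Function.Injective p.1 ∧ IsSmallIndecomp μ p.2)
    (R := fun n p q => p.2 ≤ q.2 ∧ C₁ n ≤ q.2 ∧ C₂ n ≤ q.2.map q.1 ∧ ∀ x ∈ p.2, q.1 x = p.1 x)
    (a := (w₀, ⊥)) ⟨hw₀, .bot (one_lt_aleph0.trans_le hμ)⟩ fun n p hp => by
      obtain ⟨w', A', hw', hA', h⟩ := h₁.exists_back_and_forth_step h₂ hμ hp.1 hp.2 (hC₁ n) (hC₂ n)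
      exact ⟨(w', A'), ⟨hw', hA'⟩, h⟩
  refine nonempty_mulEquiv_of_chain (A := fun n => (s n).2) (u := fun n => (s n).1)
    (monotone_nat_of_le_succ fun n => (hstep n).1) (fun n => (hs n).1)
    (fun n => (hstep n).2.2.2) (fun x => ?_) (fun y => ?_)
  · obtain ⟨n, hn⟩ := hC₁cover x
    exact ⟨n + 1, (hstep n).2.1 hn⟩
  · obtain ⟨n, hn⟩ := hC₂cover y
    exact ⟨n + 1, (hstep n).2.2.1 hn⟩

/-- For `μ` a strong limit cardinal of cofinality `ℵ₀`, any two members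
of `K^spc_μ` are isomorphic. -/
theorem KSpc_unique (μ : Cardinal.{u})
    (hsl : μ.IsStrongLimit) (hcof : μ.ord.cof = ℵ₀)
    (G₁ G₂ : Type u) [Group G₁] [Group G₂]
    (h₁ : KSpc μ G₁) (h₂ : KSpc μ G₂) :
    Nonempty (G₁ ≃* G₂) :=
  KSpc_unique_general μ hsl G₁ G₂ h₁ h₂
end

section
/- If M, N ∈ K_fnq, M ≤₂ N, c ∈ Q^M and a ∈ P^M, then the E^N_c-equivalence class of a is included in M. -/
universe u
open Cardinal

/-- A member of the class `K_fnq`: a structure on (a subset of) the carrier `α`, consisting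
of disjoint sets `P` (nonempty) and `Q`, a family `⟨E_c : c ∈ Q⟩` of equivalence relations
on `P`, each with a finite bound on the size of its classes, and predicates
`Q_{n,k} ⊆ Q^n` covering all tuples from `Q`, such that for `c̄ ∈ Q_{n,k}` the equivalence
relation generated by the `E_{c̄ i}` has all classes of size `≤ k`. -/
structure Fnq (α : Type u) : Type u where
  P : Set α
  Q : Set α
  E : α → α → α → Prop
  Qnk : (n k : ℕ) → Set (Fin n → α)
  P_nonempty : P.Nonempty
  disj : Disjoint P Q
  E_mem : ∀ a b c, E a b c → a ∈ P ∧ b ∈ P ∧ c ∈ Q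
  E_refl : ∀ c ∈ Q, ∀ a ∈ P, E a a c
  E_symm : ∀ c a b, E a b c → E b a c
  E_trans : ∀ c a b d, E a b c → E b d c → E a d c
  E_bdd : ∀ c ∈ Q, ∃ k : ℕ, ∀ a ∈ P, #{b | E a b c} ≤ (k : Cardinal.{u})
  Qnk_mem : ∀ n k (cb : Fin n → α), cb ∈ Qnk n k → ∀ i, cb i ∈ Q
  Qnk_cover : ∀ n (cb : Fin n → α), (∀ i, cb i ∈ Q) → ∃ k : ℕ, 1 ≤ k ∧ cb ∈ Qnk n k
  Qnk_bdd : ∀ n k (cb : Fin n → α), cb ∈ Qnk n k → ∀ a ∈ P,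
    #{b | Relation.EqvGen (fun x y => ∃ i, E x y (cb i)) a b} ≤ (k : Cardinal.{u})

namespace Fnq

variable {α β : Type u}

/-- The universe of the structure. -/
def univ (M : Fnq α) : Set α := M.P ∪ M.Q

/-- `M` is a substructure of `N`: the relations of `M` are the restrictions of those
of `N` to the universe of `M`. -/
def Sub (M N : Fnq α) : Prop :=
  M.P ⊆ N.P ∧ M.Q ⊆ N.Q ∧
  (∀ a b c, M.E a b c ↔ a ∈ M.P ∧ b ∈ M.P ∧ c ∈ M.Q ∧ N.E a b c) ∧
  (∀ n k (cb : Fin n → α), cb ∈ M.Qnk n k ↔ (∀ i, cb i ∈ M.Q) ∧ cb ∈ N.Qnk n k)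

/-- `f` is a one-to-one homomorphism of `N ↾ A` into `M` over `A ∩ M`. -/
def HomOn (N M : Fnq α) (A : Set α) (f : α → α) : Prop :=
  Set.InjOn f A ∧
  (∀ a ∈ A, a ∈ N.P → f a ∈ M.P) ∧
  (∀ a ∈ A, a ∈ N.Q → f a ∈ M.Q) ∧
  (∀ a ∈ A, ∀ b ∈ A, ∀ c ∈ A, N.E a b c → M.E (f a) (f b) (f c)) ∧
  (∀ n k (cb : Fin n → α), (∀ i, cb i ∈ A) → cb ∈ N.Qnk n k →
    (fun i => f (cb i)) ∈ M.Qnk n k) ∧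
  (∀ a ∈ A ∩ M.univ, f a = a)

/-- `M ≤₂ N`: `M` is a substructure of `N` and every finite subset of `N` admits a
one-to-one homomorphism into `M` over `A ∩ M`. -/
def le2 (M N : Fnq α) : Prop :=
  M.Sub N ∧ ∀ A : Set α, A ⊆ N.univ → A.Finite → ∃ f, HomOn N M A f

/-- `M ≤₃ N`: `M` is a substructure of `N` and every countable subset of `N` meeting `Q^N`
in a finite set admits a one-to-one homomorphism into `M` over `A ∩ M`. -/
def le3 (M N : Fnq α) : Prop :=
  M.Sub N ∧ ∀ A : Set α, A ⊆ N.univ → A.Countable → (A ∩ N.Q).Finite →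
    ∃ f, HomOn N M A f

/-- `f` is an isomorphism from `M` onto `N`. -/
def IsoOn (M : Fnq β) (N : Fnq α) (f : β → α) : Prop :=
  Set.InjOn f M.univ ∧ f '' M.P = N.P ∧ f '' M.Q = N.Q ∧
  (∀ a ∈ M.P, ∀ b ∈ M.P, ∀ c ∈ M.Q, (M.E a b c ↔ N.E (f a) (f b) (f c))) ∧
  (∀ n k (cb : Fin n → β), (∀ i, cb i ∈ M.Q) →
    (cb ∈ M.Qnk n k ↔ (fun i => f (cb i)) ∈ N.Qnk n k))

end Fnq

/-- If `M ≤₂ N`, `c ∈ Q^M` and `a ∈ P^M`, then the `E^N_c`-equivalence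
class of `a` is included in `M`. -/
theorem Fnq.class_subset_of_le2 {α : Type u} (M N : Fnq α)
    (h : M.le2 N) (c : α) (hc : c ∈ M.Q) (a : α) (ha : a ∈ M.P) :
    {b | N.E a b c} ⊆ M.univ := by
  obtain ⟨hsub, hle⟩ := h
  obtain ⟨hP, hQ, hE, -⟩ := hsub
  have hcN : c ∈ N.Q := hQ hc
  have haN : a ∈ N.P := hP ha
  set S : Set α := {b | N.E a b c} with hS
  have haS : a ∈ S := N.E_refl c hcN a haN
  -- S is finite
  have hSfin : S.Finite := by
    obtain ⟨k, hk⟩ := N.E_bdd c hcN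
    exact Cardinal.lt_aleph0_iff_set_finite.1
      ((hk a haN).trans_lt (Cardinal.nat_lt_aleph0 k))
  set A : Set α := insert c S with hA
  have hAsub : A ⊆ N.univ := by
    rintro x (rfl | hx)
    · exact Or.inr hcN
    · exact Or.inl (N.E_mem a x c hx).2.1
  have hAfin : A.Finite := hSfin.insert c
  obtain ⟨f, hinj, hfP, hfQ, hfE, -, hfix⟩ := hle A hAsub hAfin
  have hcA : c ∈ A := Set.mem_insert _ _
  have haA : a ∈ A := Set.mem_insert_of_mem _ haS
  have hfc : f c = c := hfix c ⟨hcA, Or.inr hc⟩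
  have hfa : f a = a := hfix a ⟨haA, Or.inl ha⟩
  have hmaps : Set.MapsTo f S S := by
    intro b hb
    have hMe : M.E (f a) (f b) (f c) :=
      hfE a haA b (Set.mem_insert_of_mem _ hb) c hcA hb
    rw [hfa, hfc] at hMe
    exact ((hE a (f b) c).1 hMe).2.2.2
  have hinjS : Set.InjOn f S := hinj.mono (Set.subset_insert _ _)
  have hbij := (hSfin.injOn_iff_bijOn_of_mapsTo hmaps).1 hinjS
  intro b hb
  obtain ⟨b', hb', rfl⟩ := hbij.surjOn hb
  have hMe : M.E (f a) (f b') (f c) :=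
    hfE a haA b' (Set.mem_insert_of_mem _ hb') c hcA hb'
  rw [hfa, hfc] at hMe
  exact Or.inl ((hE a (f b') c).1 hMe).2.1
end
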